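/- Let $X \subseteq \mathbb{R}^n$ be closed and convex, $\omega$ differentiable and $\mu_\omega$-strongly convex on $X$ with Bregman distance $D$ and prox mapping $P(x,y) = \arg\min_{z \in X}\{\langle y, z\rangle + D(x,z)\}$. Then for any $x, z \in X$ and $y \in \mathbb{R}^n$: $D(P(x,y), z) \le D(x,z) + \langle y, z - x\rangle + \frac{\|y\|_*^2}{2\mu_\omega}$, where $\|\cdot\|_*$ is the dual norm. -/

import Mathlib

/-!
The optimality condition of the prox step `p = P(x, y)` is the variational inequality
`⟪y + ∇ω p - ∇ω x, z - p⟫ ≥ 0` on `X`. Combined with the three-point identity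
`D(p, z) = D(x, z) - D(x, p) - ⟪∇ω p - ∇ω x, z - p⟫` it gives
`D(p, z) ≤ D(x, z) + ⟪y, z - x⟫ + ⟪y, x - p⟫ - D(x, p)`, and strong convexity
`D(x, p) ≥ μ/2 ‖x - p‖²` together with Young's inequality absorbs `⟪y, x - p⟫`.
In a Euclidean space the dual norm is the norm itself.
-/

open scoped InnerProductSpace

section

variable {E : Type*} [NormedAddCommGroup E] [InnerProductSpace ℝ E]

theorem sSup_inner_of_norm_le_one_eq_norm (v : E) :
    sSup {t : ℝ | ∃ u : E, ‖u‖ ≤ 1 ∧ t = ⟪u, v⟫_ℝ} = ‖v‖ := by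
  refine IsGreatest.csSup_eq ⟨⟨‖v‖⁻¹ • v, ?_, ?_⟩, ?_⟩
  · rw [norm_smul, norm_inv, norm_norm]
    exact inv_mul_le_one_of_le₀ le_rfl (norm_nonneg v)
  · rw [real_inner_smul_left, real_inner_self_eq_norm_sq]
    rcases eq_or_ne ‖v‖ 0 with h | h
    · simp [h]
    · field_simp
  · rintro t ⟨u, hu, rfl⟩
    calc ⟪u, v⟫_ℝ ≤ ‖u‖ * ‖v‖ := real_inner_le_norm u v
      _ ≤ ‖v‖ := mul_le_of_le_one_left (norm_nonneg v) hu

theorem real_inner_le_sq_div_add_mul_sq {μ : ℝ} (hμ : 0 < μ) (y v : E) :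
    ⟪y, v⟫_ℝ ≤ ‖y‖ ^ 2 / (2 * μ) + μ / 2 * ‖v‖ ^ 2 := by
  have hyoung : 2 * μ * (‖y‖ * ‖v‖) ≤ ‖y‖ ^ 2 + μ ^ 2 * ‖v‖ ^ 2 := by
    nlinarith [sq_nonneg (‖y‖ - μ * ‖v‖)]
  calc ⟪y, v⟫_ℝ ≤ ‖y‖ * ‖v‖ := real_inner_le_norm y v
    _ ≤ ‖y‖ ^ 2 / (2 * μ) + μ / 2 * ‖v‖ ^ 2 := by
      rw [div_add' _ _ _ (by positivity), le_div_iff₀ (by positivity)]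
      nlinarith

variable [CompleteSpace E]

theorem IsMinOn.inner_gradient_sub_nonneg {f : E → ℝ} {s : Set E} {p g z : E}
    (hmin : IsMinOn f s p) (hs : Convex ℝ s) (hp : p ∈ s) (hz : z ∈ s)
    (hf : HasGradientAt f g p) : 0 ≤ ⟪g, z - p⟫_ℝ :=
  hmin.localize.hasFDerivWithinAt_nonneg hf.hasFDerivAt.hasFDerivWithinAt
    (sub_mem_posTangentConeAt_of_segment_subset (hs.segment_subset hp hz))

noncomputable def bregman (ω : E → ℝ) (a b : E) : ℝ :=
  ω b - ω a - ⟪gradient ω a, b - a⟫_ℝ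

theorem bregman_three_point (ω : E → ℝ) (x p z : E) :
    bregman ω p z =
      bregman ω x z - bregman ω x p - ⟪gradient ω p - gradient ω x, z - p⟫_ℝ := by
  have hsplit : z - x = (z - p) + (p - x) := by abel
  simp only [bregman, hsplit, inner_add_right, inner_sub_left]
  ring

theorem hasGradientAt_inner_add_bregman {ω : E → ℝ} {b : E} (hω : DifferentiableAt ℝ ω b)
    (y a : E) :
    HasGradientAt (fun z => ⟪y, z⟫_ℝ + bregman ω a z) (y + (gradient ω b - gradient ω a)) b := by
  rw [hasGradientAt_iff_hasFDerivAt]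
  have hlin : ∀ c : E, HasFDerivAt (fun z => ⟪c, z⟫_ℝ) (innerSL ℝ c) b :=
    fun c => (innerSL ℝ c).hasFDerivAt
  have := (hlin y).add ((hω.hasGradientAt.hasFDerivAt.sub_const (ω a)).sub
    ((hlin (gradient ω a)).sub_const ⟪gradient ω a, a⟫_ℝ))
  refine (this.congr_fderiv ?_).congr_of_eventuallyEq (.of_eq ?_)
  · ext v
    simp
  · ext z
    simp only [bregman, inner_sub_right, Pi.add_apply, Pi.sub_apply]

theorem bregman_prox_le {X : Set E} (hX : Convex ℝ X) {ω : E → ℝ} {μ : ℝ} (hμ : 0 < μ)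
    (hsc : ∀ a ∈ X, ∀ b ∈ X, ω a + ⟪gradient ω a, b - a⟫_ℝ + μ / 2 * ‖a - b‖ ^ 2 ≤ ω b)
    {x y p z : E} (hx : x ∈ X) (hp : p ∈ X) (hz : z ∈ X) (hω : DifferentiableAt ℝ ω p)
    (hmin : IsMinOn (fun z => ⟪y, z⟫_ℝ + bregman ω x z) X p) :
    bregman ω p z ≤ bregman ω x z + ⟪y, z - x⟫_ℝ + ‖y‖ ^ 2 / (2 * μ) := by
  have hvar : 0 ≤ ⟪y + (gradient ω p - gradient ω x), z - p⟫_ℝ :=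
    hmin.inner_gradient_sub_nonneg hX hp hz (hasGradientAt_inner_add_bregman hω y x)
  have hstrong : μ / 2 * ‖x - p‖ ^ 2 ≤ bregman ω x p := by
    have := hsc x hx p hp
    rw [bregman]
    linarith
  have hyoung := real_inner_le_sq_div_add_mul_sq hμ y (x - p)
  have hsplit : ⟪y, z - p⟫_ℝ = ⟪y, z - x⟫_ℝ + ⟪y, x - p⟫_ℝ := by
    rw [← inner_add_right, sub_add_sub_cancel]
  rw [inner_add_left, hsplit] at hvar
  rw [bregman_three_point ω x p z]
  linarith

end

theorem stmt_10_general {n : ℕ} (X : Set (EuclideanSpace ℝ (Fin n)))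
    (hXconv : Convex ℝ X)
    (ω : EuclideanSpace ℝ (Fin n) → ℝ) (μω : ℝ) (hμ : 0 < μω)
    (hdiff : Differentiable ℝ ω)
    (hsc : ∀ a ∈ X, ∀ b ∈ X,
      ω a + ⟪gradient ω a, b - a⟫_ℝ + μω / 2 * ‖a - b‖ ^ 2 ≤ ω b)
    (D : EuclideanSpace ℝ (Fin n) → EuclideanSpace ℝ (Fin n) → ℝ)
    (hD : ∀ a b, D a b = ω b - ω a - ⟪gradient ω a, b - a⟫_ℝ)
    (dualNorm : EuclideanSpace ℝ (Fin n) → ℝ)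
    (hdual : ∀ v, dualNorm v = sSup {t : ℝ | ∃ u : EuclideanSpace ℝ (Fin n), ‖u‖ ≤ 1 ∧ t = ⟪u, v⟫_ℝ})
    (x : EuclideanSpace ℝ (Fin n)) (hx : x ∈ X)
    (y : EuclideanSpace ℝ (Fin n))
    (p : EuclideanSpace ℝ (Fin n)) (hp : p ∈ X)
    (hmin : IsMinOn (fun z => ⟪y, z⟫_ℝ + D x z) X p) :
    ∀ z ∈ X, D p z ≤ D x z + ⟪y, z - x⟫_ℝ + dualNorm y ^ 2 / (2 * μω) := by
  obtain rfl : D = bregman ω := funext₂ hD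
  intro z hz
  rw [hdual, sSup_inner_of_norm_le_one_eq_norm]
  exact bregman_prox_le hXconv hμ hsc hx hp hz (hdiff p) hmin

theorem stmt_10 {n : ℕ} (X : Set (EuclideanSpace ℝ (Fin n)))
    (hXne : X.Nonempty) (hXclosed : IsClosed X) (hXconv : Convex ℝ X)
    (ω : EuclideanSpace ℝ (Fin n) → ℝ) (μω : ℝ) (hμ : 0 < μω)
    (hdiff : Differentiable ℝ ω)
    (hsc : ∀ a ∈ X, ∀ b ∈ X,
      ω a + ⟪gradient ω a, b - a⟫_ℝ + μω / 2 * ‖a - b‖ ^ 2 ≤ ω b)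
    (D : EuclideanSpace ℝ (Fin n) → EuclideanSpace ℝ (Fin n) → ℝ)
    (hD : ∀ a b, D a b = ω b - ω a - ⟪gradient ω a, b - a⟫_ℝ)
    (dualNorm : EuclideanSpace ℝ (Fin n) → ℝ)
    (hdual : ∀ v, dualNorm v = sSup {t : ℝ | ∃ u : EuclideanSpace ℝ (Fin n), ‖u‖ ≤ 1 ∧ t = ⟪u, v⟫_ℝ})
    (x : EuclideanSpace ℝ (Fin n)) (hx : x ∈ X)
    (y : EuclideanSpace ℝ (Fin n))
    (p : EuclideanSpace ℝ (Fin n)) (hp : p ∈ X)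
    (hmin : IsMinOn (fun z => ⟪y, z⟫_ℝ + D x z) X p) :
    ∀ z ∈ X, D p z ≤ D x z + ⟪y, z - x⟫_ℝ + dualNorm y ^ 2 / (2 * μω) :=
  stmt_10_general X hXconv ω μω hμ hdiff hsc D hD dualNorm hdual x hx y p hp hmin
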